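/- Let τ be in the upper half plane ℍ and let α, ρ, λ ∈ ℂ. Then: (1) there is a nonzero constant C (independent of z) such that f_λ(z; α, ρ) = C · [ (q^{2+α+ρ+iλ−z}, q^{1+ρ+iλ+z}; q²)_∞ / (q^{α+ρ−iλ+z}, q^{1+ρ−iλ−z}; q²)_∞ ] · q^{−αz/2}; (2) f_λ(·; α, ρ) is τ^{-1}-periodic, i.e. f_λ(z + τ^{-1}; α, ρ) = f_λ(z; α, ρ) for all z, if and only if α ∈ 2ℤ; (3) the poles of f_λ(·; α, ρ) are contained in (iλ − α − ρ + 2ℤ_{≤0} + τ^{-1}ℤ) ∪ (−iλ + ρ + 1 + 2ℤ_{≥0} + τ^{-1}ℤ); in particular, if τ ∈ iℝ_{>0}, α > 0, ρ ≥ 0 and λ ∈ ℝ, then f_λ(·; α, ρ) is analytic on the strip {z ∈ ℂ : |Re(z)| ≤ ρ}. -/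

import Mathlib

noncomputable section

open Complex

/-- `q^u = exp(2πiτu)`. -/
def qpow (τ u : ℂ) : ℂ := Complex.exp (2 * (Real.pi : ℂ) * Complex.I * τ * u)

/-- The q-gamma type function `Γ_τ(x) = q^{−x²/16} / (−q^{(x+1)/2}; q)_∞`. -/
def qGamma (τ x : ℂ) : ℂ :=
  qpow τ (-(x ^ 2) / 16) / ∏' n : ℕ, (1 + qpow τ ((x + 1) / 2 + (n : ℂ)))

/-- `(q^u; q²)_∞ = ∏_{n≥0} (1 − q^{u+2n})`. -/
def pochQ2 (τ u : ℂ) : ℂ := ∏' n : ℕ, (1 - qpow τ (u + 2 * (n : ℂ)))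

/-- The eigenfunction `f_λ(z; α, ρ)` of the twisted primitive element. -/
def fEig (τ lam α ρ z : ℂ) : ℂ :=
  (qGamma (2 * τ) (-1 - (2 * τ)⁻¹ + α + ρ - Complex.I * lam + z) *
      qGamma (2 * τ) (-(2 * τ)⁻¹ + ρ - Complex.I * lam - z)) /
    (qGamma (2 * τ) (1 - (2 * τ)⁻¹ + α + ρ + Complex.I * lam - z) *
      qGamma (2 * τ) (-(2 * τ)⁻¹ + ρ + Complex.I * lam + z))

/-- The set `(iλ − α − ρ + 2ℤ_{≤0} + τ⁻¹ℤ) ∪ (−iλ + ρ + 1 + 2ℤ_{≥0} + τ⁻¹ℤ)`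
containing the poles of `f_λ(·; α, ρ)`. -/
def fEigPoles (τ lam α ρ : ℂ) : Set ℂ :=
  {z : ℂ | ∃ k l : ℤ, k ≤ 0 ∧
      z = Complex.I * lam - α - ρ + 2 * (k : ℂ) + τ⁻¹ * (l : ℂ)} ∪
  {z : ℂ | ∃ k l : ℤ, 0 ≤ k ∧
      z = -(Complex.I * lam) + ρ + 1 + 2 * (k : ℂ) + τ⁻¹ * (l : ℂ)}

/-!
Since `qpow τ (2τ)⁻¹ = -1`, the factors `1 + q^{x+1+2n}` of `Γ_{2τ}(x)` are the factors
`1 - q^{x+1+(2τ)⁻¹+2n}` of `(x+1+(2τ)⁻¹; q²)_∞`, so `Γ_{2τ}(x)` is a Gaussian `q`-power over a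
`q²`-Pochhammer symbol, and the four Gaussians of `f_λ` multiply to a constant times `q^{-αz/2}`.
The symbols `(u; q²)_∞` are entire in `u`, invariant under `u ↦ u + τ⁻¹` and vanish only on
`-2ℕ + τ⁻¹ℤ`. Hence `z ↦ z + τ⁻¹` multiplies `f_λ` by `e^{-πiα}`, which is `1` iff `α ∈ 2ℤ`
because `f_λ` vanishes only on a countable set; the poles lie among the zeros of the two
denominator symbols, and for real data these stay off the strip.
-/

theorem differentiable_tprod_one_sub_mul_pow {c : ℂ} (hc : ‖c‖ < 1) :
    Differentiable ℂ fun w : ℂ ↦ ∏' n : ℕ, (1 - w * c ^ n) := by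
  intro w₀
  set R := ‖w₀‖ + 1
  have hprod : HasProdLocallyUniformlyOn (fun n w ↦ 1 + -(w * c ^ n))
      (fun w ↦ ∏' n : ℕ, (1 + -(w * c ^ n))) (Metric.ball 0 R) := by
    refine ((summable_geometric_of_lt_one (norm_nonneg c) hc).mul_left R
      ).hasProdLocallyUniformlyOn_nat_one_add Metric.isOpen_ball
        (.of_forall fun n w hw ↦ ?_) fun n ↦ by fun_prop
    rw [norm_neg, norm_mul, norm_pow]
    exact mul_le_mul_of_nonneg_right (mem_ball_zero_iff.mp hw).le (by positivity)
  have hdiff := hprod.differentiableOn (.of_forall fun s ↦ by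
    simpa [Finset.prod_fn] using DifferentiableOn.finsetProd fun _ _ ↦ by fun_prop)
    Metric.isOpen_ball
  simp only [← sub_eq_add_neg] at hdiff
  exact hdiff.differentiableAt (Metric.isOpen_ball.mem_nhds (by simp [R]))

theorem tprod_one_sub_mul_pow_ne_zero {c w : ℂ} (hc : ‖c‖ < 1) (hw : ∀ n : ℕ, w * c ^ n ≠ 1) :
    ∏' n : ℕ, (1 - w * c ^ n) ≠ 0 := by
  simp only [sub_eq_add_neg]
  refine tprod_one_add_ne_zero_of_summable (fun n ↦ ?_) ?_
  · rw [← sub_eq_add_neg, sub_ne_zero]; exact (hw n).symm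
  · simpa [norm_mul, norm_pow] using (summable_geometric_of_lt_one (norm_nonneg c) hc).mul_left ‖w‖

section QPower

theorem qpow_add (τ u v : ℂ) : qpow τ (u + v) = qpow τ u * qpow τ v := by
  rw [qpow, qpow, qpow, ← exp_add]; ring_nf

theorem qpow_ne_zero (τ u : ℂ) : qpow τ u ≠ 0 := exp_ne_zero _

theorem qpow_add_two_mul_natCast (τ u : ℂ) (n : ℕ) :
    qpow τ (u + 2 * n) = qpow τ u * qpow τ 2 ^ n := by
  rw [qpow, qpow, qpow, ← exp_nat_mul, ← exp_add]; ring_nf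

theorem qpow_eq_one_iff {τ : ℂ} (hτ : τ ≠ 0) {v : ℂ} :
    qpow τ v = 1 ↔ ∃ m : ℤ, v = τ⁻¹ * m := by
  have hπ : 2 * (Real.pi : ℂ) * I ≠ 0 := by simp [Real.pi_ne_zero]
  rw [qpow, exp_eq_one_iff]
  refine exists_congr fun m ↦ ⟨fun h ↦ ?_, fun h ↦ ?_⟩
  · field_simp
    exact mul_left_cancel₀ hπ (by linear_combination h)
  · rw [h]; field_simp

theorem qpow_add_inv_mul_intCast {τ : ℂ} (hτ : τ ≠ 0) (u : ℂ) (l : ℤ) :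
    qpow τ (u + τ⁻¹ * l) = qpow τ u := by
  rw [qpow_add, (qpow_eq_one_iff hτ).mpr ⟨l, rfl⟩, mul_one]

theorem qpow_inv_two_mul {τ : ℂ} (hτ : τ ≠ 0) : qpow τ (2 * τ)⁻¹ = -1 := by
  rw [qpow, ← exp_pi_mul_I]; congr 1; field_simp

theorem norm_qpow_two_lt_one {τ : ℂ} (hτ : 0 < τ.im) : ‖qpow τ 2‖ < 1 := by
  rw [qpow, norm_exp, Real.exp_lt_one_iff]
  have : (2 * (Real.pi : ℂ) * I * τ * 2).re = -(4 * Real.pi * τ.im) := by simp; ring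
  rw [this]
  have := Real.pi_pos
  nlinarith

theorem differentiable_qpow (τ : ℂ) : Differentiable ℂ (qpow τ) := by
  unfold qpow; fun_prop

end QPower

section Pochhammer

variable {τ : ℂ}

theorem pochQ2_eq_tprod (τ u : ℂ) :
    pochQ2 τ u = ∏' n : ℕ, (1 - qpow τ u * qpow τ 2 ^ n) :=
  tprod_congr fun n ↦ by rw [qpow_add_two_mul_natCast]

theorem pochQ2_add_inv_mul_intCast (hτ : τ ≠ 0) (u : ℂ) (l : ℤ) :
    pochQ2 τ (u + τ⁻¹ * l) = pochQ2 τ u := by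
  simp only [pochQ2_eq_tprod, qpow_add_inv_mul_intCast hτ]

theorem pochQ2_add_inv (hτ : τ ≠ 0) (u : ℂ) : pochQ2 τ (u + τ⁻¹) = pochQ2 τ u := by
  simpa using pochQ2_add_inv_mul_intCast hτ u 1

theorem pochQ2_sub_inv (hτ : τ ≠ 0) (u : ℂ) : pochQ2 τ (u - τ⁻¹) = pochQ2 τ u := by
  simpa [← sub_eq_add_neg] using pochQ2_add_inv_mul_intCast hτ u (-1)

theorem differentiable_pochQ2 (hτ : 0 < τ.im) : Differentiable ℂ (pochQ2 τ) := by
  rw [funext (pochQ2_eq_tprod τ)]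
  exact (differentiable_tprod_one_sub_mul_pow (norm_qpow_two_lt_one hτ)).comp
    (differentiable_qpow τ)

theorem exists_of_pochQ2_eq_zero (hτ : 0 < τ.im) {u : ℂ} (h : pochQ2 τ u = 0) :
    ∃ n : ℕ, ∃ m : ℤ, u = -(2 * n) + τ⁻¹ * m := by
  by_contra! hu
  refine tprod_one_sub_mul_pow_ne_zero (norm_qpow_two_lt_one hτ) (fun n hn ↦ ?_)
    ((pochQ2_eq_tprod τ u).symm.trans h)
  rw [← qpow_add_two_mul_natCast, qpow_eq_one_iff (by rintro rfl; simp at hτ)] at hn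
  obtain ⟨m, hm⟩ := hn
  exact hu n m (by linear_combination hm)

theorem countable_setOf_pochQ2_eq_zero (hτ : 0 < τ.im) :
    {u | pochQ2 τ u = 0}.Countable := by
  refine (Set.countable_range fun p : ℕ × ℤ ↦ -(2 * (p.1 : ℂ)) + τ⁻¹ * p.2).mono ?_
  intro u hu
  obtain ⟨n, m, rfl⟩ := exists_of_pochQ2_eq_zero hτ hu
  exact ⟨(n, m), rfl⟩

end Pochhammer

theorem div_mul_div_div_div_mul_div {F : Type*} [Field F] {a b c d A B C D K : F}
    (h : a * b / (c * d) = K) :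
    a / A * (b / B) / (c / C * (d / D)) = K * (C * D) / (A * B) := by
  rw [← h]; simp only [div_eq_mul_inv, mul_inv, inv_inv]; ring

section Eigenfunction

variable {τ lam α ρ : ℂ}

theorem qGamma_two_mul_eq (hτ : τ ≠ 0) (x : ℂ) :
    qGamma (2 * τ) x = qpow (2 * τ) (-(x ^ 2) / 16) / pochQ2 τ (x + 1 + (2 * τ)⁻¹) := by
  refine congrArg _ (tprod_congr fun n ↦ ?_)
  rw [add_right_comm, qpow_add τ (x + 1 + _), qpow_inv_two_mul hτ, qpow, qpow]
  ring_nf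

def fEigConst (τ lam α ρ : ℂ) : ℂ :=
  ((1 - (2 * τ)⁻¹ + α + ρ + I * lam) ^ 2 + (-(2 * τ)⁻¹ + ρ + I * lam) ^ 2
    - (-1 - (2 * τ)⁻¹ + α + ρ - I * lam) ^ 2 - (-(2 * τ)⁻¹ + ρ - I * lam) ^ 2) / 16

theorem fEig_eq (hτ : τ ≠ 0) (z : ℂ) :
    fEig τ lam α ρ z =
      qpow (2 * τ) (fEigConst τ lam α ρ) *
        (pochQ2 τ (2 + α + ρ + I * lam - z) * pochQ2 τ (1 + ρ + I * lam + z)) /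
        (pochQ2 τ (α + ρ - I * lam + z) * pochQ2 τ (1 + ρ - I * lam - z)) *
        qpow τ (-(α * z) / 2) := by
  simp only [fEig, qGamma_two_mul_eq hτ]
  rw [div_mul_div_div_div_mul_div
    (K := qpow (2 * τ) (fEigConst τ lam α ρ) * qpow τ (-(α * z) / 2))]
  · ring_nf
  · simp only [qpow, fEigConst, ← exp_add, ← exp_sub]
    ring_nf

theorem fEig_add_inv (hτ : τ ≠ 0) (z : ℂ) :
    fEig τ lam α ρ (z + τ⁻¹) = exp (-(Real.pi * I * α)) * fEig τ lam α ρ z := by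
  have hshift :
      qpow τ (-(α * (z + τ⁻¹)) / 2) = exp (-(Real.pi * I * α)) * qpow τ (-(α * z) / 2) := by
    rw [qpow, qpow, ← exp_add]; congr 1; field_simp; ring
  simp only [fEig_eq hτ, sub_add_eq_sub_sub, ← add_assoc, pochQ2_add_inv hτ, pochQ2_sub_inv hτ,
    hshift]
  ring

theorem exp_neg_pi_mul_I_mul_eq_one_iff : exp (-(Real.pi * I * α)) = 1 ↔ ∃ k : ℤ, α = 2 * k := by
  have hπ : (Real.pi : ℂ) * I ≠ 0 := by simp [Real.pi_ne_zero]
  rw [exp_eq_one_iff]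
  constructor
  · rintro ⟨n, hn⟩
    exact ⟨-n, mul_left_cancel₀ hπ (by push_cast; linear_combination -hn)⟩
  · rintro ⟨k, rfl⟩
    exact ⟨-k, by push_cast; ring⟩

theorem exists_fEig_ne_zero (hτ : 0 < τ.im) : ∃ z, fEig τ lam α ρ z ≠ 0 := by
  have hτ0 : τ ≠ 0 := by rintro rfl; simp at hτ
  have hZ := countable_setOf_pochQ2_eq_zero hτ
  have hzeros : {z | fEig τ lam α ρ z = 0} ⊆
      (fun z ↦ 2 + α + ρ + I * lam - z) ⁻¹' {u | pochQ2 τ u = 0} ∪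
      (fun z ↦ 1 + ρ + I * lam + z) ⁻¹' {u | pochQ2 τ u = 0} ∪
      (fun z ↦ α + ρ - I * lam + z) ⁻¹' {u | pochQ2 τ u = 0} ∪
      (fun z ↦ 1 + ρ - I * lam - z) ⁻¹' {u | pochQ2 τ u = 0} := by
    intro z hz
    simpa [fEig_eq hτ0, qpow_ne_zero, or_assoc] using hz
  have hcount : {z | fEig τ lam α ρ z = 0}.Countable := by
    refine Set.Countable.mono hzeros (.union (.union (.union ?_ ?_) ?_) ?_) <;>
      refine hZ.preimage fun z w h ↦ ?_ <;> simpa using h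
  by_contra! h
  exact not_countable_complex (hcount.mono fun z _ ↦ h z)

theorem fEig_periodic_iff (hτ : 0 < τ.im) :
    (∀ z, fEig τ lam α ρ (z + τ⁻¹) = fEig τ lam α ρ z) ↔ ∃ k : ℤ, α = 2 * k := by
  have hτ0 : τ ≠ 0 := by rintro rfl; simp at hτ
  simp only [fEig_add_inv hτ0, ← exp_neg_pi_mul_I_mul_eq_one_iff]
  constructor
  · obtain ⟨z, hz⟩ := exists_fEig_ne_zero (lam := lam) (α := α) (ρ := ρ) hτ
    exact fun h ↦ mul_right_cancel₀ hz ((h z).trans (one_mul _).symm)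
  · intro hexp z
    rw [hexp, one_mul]

theorem analyticAt_fEig (hτ : 0 < τ.im) {z : ℂ} (hz : z ∉ fEigPoles τ lam α ρ) :
    AnalyticAt ℂ (fEig τ lam α ρ) z := by
  have hτ0 : τ ≠ 0 := by rintro rfl; simp at hτ
  have hD₁ : pochQ2 τ (α + ρ - I * lam + z) ≠ 0 := fun h ↦ by
    obtain ⟨n, m, hnm⟩ := exists_of_pochQ2_eq_zero hτ h
    exact hz (.inl ⟨-n, m, by simp, by push_cast; linear_combination hnm⟩)
  have hD₂ : pochQ2 τ (1 + ρ - I * lam - z) ≠ 0 := fun h ↦ by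
    obtain ⟨n, m, hnm⟩ := exists_of_pochQ2_eq_zero hτ h
    exact hz (.inr ⟨n, -m, by simp, by push_cast; linear_combination -hnm⟩)
  have hP := differentiable_pochQ2 hτ
  have hq₁ := differentiable_qpow τ
  have hq₂ := differentiable_qpow (2 * τ)
  rw [funext (fEig_eq hτ0)]
  refine .fun_mul (.fun_div ?_ ?_ (mul_ne_zero hD₁ hD₂)) ?_ <;>
    exact Differentiable.analyticAt (by fun_prop) _

theorem lt_abs_re_of_mem_fEigPoles (hτ : τ.re = 0) (hα : 0 < α.re) (hlam : lam.im = 0) {z : ℂ}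
    (hz : z ∈ fEigPoles τ lam α ρ) : ρ.re < |z.re| := by
  have hτinv : τ⁻¹.re = 0 := by simp [inv_re, hτ]
  rcases hz with ⟨k, l, hk, rfl⟩ | ⟨k, l, hk, rfl⟩
  · have : (k : ℝ) ≤ 0 := by exact_mod_cast hk
    simp only [add_re, sub_re, mul_re, I_re, I_im, hlam, hτinv, intCast_re, intCast_im, re_ofNat,
      im_ofNat]
    exact lt_abs.mpr (.inr (by linarith))
  · have : (0 : ℝ) ≤ k := by exact_mod_cast hk
    simp only [add_re, neg_re, mul_re, I_re, I_im, hlam, hτinv, intCast_re, intCast_im, re_ofNat,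
      im_ofNat, one_re]
    exact lt_abs.mpr (.inl (by linarith))

end Eigenfunction

/-- (1) `f_λ(z;α,ρ)` equals, up to a nonzero constant,
`(q^{2+α+ρ+iλ−z}, q^{1+ρ+iλ+z}; q²)_∞ / (q^{α+ρ−iλ+z}, q^{1+ρ−iλ−z}; q²)_∞ · q^{−αz/2}`;
(2) `f_λ(·;α,ρ)` is `τ⁻¹`-periodic if and only if `α ∈ 2ℤ`;
(3) the poles of `f_λ(·;α,ρ)` are contained in
`(iλ−α−ρ+2ℤ_{≤0}+τ⁻¹ℤ) ∪ (−iλ+ρ+1+2ℤ_{≥0}+τ⁻¹ℤ)`; in particular, for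
`τ ∈ iℝ_{>0}`, `α > 0`, `ρ ≥ 0` and `λ ∈ ℝ`, it is analytic on the strip `|Re z| ≤ ρ`. -/
theorem fEig_poch_form_periodicity_poles (τ : ℂ) (hτ : 0 < τ.im) (lam α ρ : ℂ) :
    (∃ C : ℂ, C ≠ 0 ∧ ∀ z : ℂ,
      fEig τ lam α ρ z =
        C * (pochQ2 τ (2 + α + ρ + Complex.I * lam - z) *
              pochQ2 τ (1 + ρ + Complex.I * lam + z)) /
            (pochQ2 τ (α + ρ - Complex.I * lam + z) *
              pochQ2 τ (1 + ρ - Complex.I * lam - z)) *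
          qpow τ (-(α * z) / 2)) ∧
    ((∀ z : ℂ, fEig τ lam α ρ (z + τ⁻¹) = fEig τ lam α ρ z) ↔ ∃ k : ℤ, α = 2 * (k : ℂ)) ∧
    (∀ z : ℂ, z ∉ fEigPoles τ lam α ρ → AnalyticAt ℂ (fEig τ lam α ρ) z) ∧
    (τ.re = 0 → α.im = 0 → 0 < α.re → ρ.im = 0 → 0 ≤ ρ.re → lam.im = 0 →
      ∀ z : ℂ, |z.re| ≤ ρ.re → AnalyticAt ℂ (fEig τ lam α ρ) z) := by
  have hτ0 : τ ≠ 0 := by rintro rfl; simp at hτ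
  refine ⟨⟨qpow (2 * τ) (fEigConst τ lam α ρ), qpow_ne_zero _ _, fEig_eq hτ0⟩,
    fEig_periodic_iff hτ, fun z ↦ analyticAt_fEig hτ, ?_⟩
  intro hre _ hα _ _ hlam z hz
  exact analyticAt_fEig hτ fun hpole ↦ (lt_abs_re_of_mem_fEigPoles hre hα hlam hpole).not_ge hz
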